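/- Equality case for star-shaped graphs: let Γ be an n-star-shaped graph in ℝ^N (n ≥ 2) with center A_0, endpoints A_1, …, A_n, normalized so that ∑_{i=0}^n A_i = 0. Then equality λ_1 · ∑_{i=1}^n ℓ_i = n + |∑_{i=1}^n τ_i|² holds if and only if A_0 = 0, ∑_{i=1}^n τ_i = 0 (Γ is stationary at its center), and all edge lengths ℓ_i are equal to a common value ℓ; in that case λ_1 = 1/ℓ and all endpoints A_i lie on the sphere of radius 1/λ_1 centered at the origin. -/

import Mathlib

open MeasureTheory
open scoped RealInnerProductSpace ENNReal

noncomputable section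

/-- `A₀` (the center) together with the endpoints `A i` forms an `n`-star-shaped graph:
each endpoint differs from the center, and no edge `[A₀, Aᵢ]` is contained in another
edge `[A₀, Aⱼ]`. -/
def IsStarGraph {N n : ℕ} (A0 : EuclideanSpace ℝ (Fin N))
    (A : Fin n → EuclideanSpace ℝ (Fin N)) : Prop :=
  (∀ i, A i ≠ A0) ∧
  ∀ i j : Fin n, i ≠ j → ¬ segment ℝ A0 (A i) ⊆ segment ℝ A0 (A j)

/-- The unit direction `τᵢ = (Aᵢ − A₀)/|Aᵢ − A₀|` of the `i`-th edge of a star-shaped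
graph. -/
def starTau {N n : ℕ} (A0 : EuclideanSpace ℝ (Fin N))
    (A : Fin n → EuclideanSpace ℝ (Fin N)) (i : Fin n) : EuclideanSpace ℝ (Fin N) :=
  ‖A i - A0‖⁻¹ • (A i - A0)

/-- The first nonzero "eigenvalue" `λ₁` of a star-shaped graph, defined as the infimum of
the Rayleigh quotients
`(∑ᵢ ∫_{[A₀, Aᵢ]} ⟪∇u(x), τᵢ⟫² dℋ¹(x)) / (∑_{i=0}^n u(Aᵢ)²)`
over smooth `u : ℝᴺ → ℝ` with `∑_{i=0}^n u(Aᵢ) = 0` and `∑_{i=0}^n u(Aᵢ)² ≠ 0`. -/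
def starLambda1 {N n : ℕ} (A0 : EuclideanSpace ℝ (Fin N))
    (A : Fin n → EuclideanSpace ℝ (Fin N)) : ℝ :=
  sInf { r : ℝ | ∃ u : EuclideanSpace ℝ (Fin N) → ℝ, ContDiff ℝ (⊤ : ℕ∞) u ∧
    (u A0 + ∑ i, u (A i)) = 0 ∧ (u A0 ^ 2 + ∑ i, u (A i) ^ 2) ≠ 0 ∧
    r = (∑ i, ∫ x in segment ℝ A0 (A i),
          (fderiv ℝ u x (starTau A0 A i)) ^ 2 ∂(μH[1])) /
        (u A0 ^ 2 + ∑ i, u (A i) ^ 2) }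

namespace ReillyAux

variable {N : ℕ}



lemma enorm_sq (x : EuclideanSpace ℝ (Fin N)) : ‖x‖ ^ 2 = ∑ k, x k ^ 2 := by
  rw [EuclideanSpace.norm_eq, Real.sq_sqrt (by positivity)]
  simp [sq_abs]

lemma line_integral (p v : EuclideanSpace ℝ (Fin N)) (hv : ‖v‖ = 1) (l : ℝ)
    (g : EuclideanSpace ℝ (Fin N) → ℝ) (hg : Continuous g) :
    ∫ x in ((fun t : ℝ => p + t • v) '' Set.Icc 0 l), g x ∂(μH[1]) =
      ∫ t in Set.Icc (0:ℝ) l, g (p + t • v) := by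
  set γ : ℝ → EuclideanSpace ℝ (Fin N) := fun t : ℝ => p + t • v with hγ
  have hiso : Isometry γ := by
    apply Isometry.of_dist_eq
    intro s t
    simp [γ, dist_eq_norm, ← sub_smul, norm_smul, hv]
  have himg : ∀ s : Set ℝ, μH[1] (γ '' s) = volume s := by
    intro s
    rw [hiso.hausdorffMeasure_image (Or.inl one_pos.le), MeasureTheory.hausdorffMeasure_real]
  have hmap : (μH[1] : Measure (EuclideanSpace ℝ (Fin N))).restrict (γ '' Set.Icc 0 l)
      = Measure.map γ (volume.restrict (Set.Icc 0 l)) := by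
    refine Measure.ext fun s hs => ?_
    rw [Measure.map_apply hiso.continuous.measurable hs, Measure.restrict_apply hs,
      Measure.restrict_apply (hiso.continuous.measurable hs)]
    rw [← himg (γ ⁻¹' s ∩ Set.Icc 0 l), Set.inter_comm (γ ⁻¹' s),
      Set.image_inter_preimage, Set.inter_comm]
  calc ∫ x in γ '' Set.Icc 0 l, g x ∂(μH[1])
      = ∫ x, g x ∂((μH[1] : Measure (EuclideanSpace ℝ (Fin N))).restrict (γ '' Set.Icc 0 l)) :=
        rfl
    _ = ∫ x, g x ∂(Measure.map γ (volume.restrict (Set.Icc 0 l))) := by rw [hmap]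
    _ = ∫ t, g (γ t) ∂(volume.restrict (Set.Icc 0 l)) :=
        integral_map hiso.continuous.aemeasurable hg.aestronglyMeasurable
    _ = ∫ t in Set.Icc (0:ℝ) l, g (p + t • v) := rfl

lemma seg_param (p q : EuclideanSpace ℝ (Fin N)) (hpq : q ≠ p) :
    segment ℝ p q = (fun t : ℝ => p + t • (‖q - p‖⁻¹ • (q - p))) '' Set.Icc 0 ‖q - p‖ := by
  have hl : ‖q - p‖ ≠ 0 := by simpa [sub_eq_zero] using hpq
  have hlv : ‖q - p‖ • (‖q - p‖⁻¹ • (q - p)) = q - p := by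
    rw [smul_smul, mul_inv_cancel₀ hl, one_smul]
  rw [segment_eq_image']
  ext x
  constructor
  · rintro ⟨θ, ⟨h0, h1⟩, rfl⟩
    refine ⟨θ * ‖q - p‖, ⟨by positivity, by nlinarith [norm_nonneg (q-p)]⟩, ?_⟩
    show p + (θ * ‖q - p‖) • ‖q - p‖⁻¹ • (q - p) = p + θ • (q - p)
    rw [mul_smul, hlv]
  · rintro ⟨t, ⟨h0, h1⟩, rfl⟩
    have hlpos : 0 < ‖q - p‖ := lt_of_le_of_ne (norm_nonneg _) (Ne.symm hl)
    refine ⟨t / ‖q - p‖, ⟨by positivity, by rw [div_le_one hlpos]; exact h1⟩, ?_⟩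
    show p + (t / ‖q - p‖) • (q - p) = p + t • ‖q - p‖⁻¹ • (q - p)
    rw [smul_smul, div_eq_mul_inv]

lemma integral_const_seg (p q : EuclideanSpace ℝ (Fin N)) (c : ℝ) :
    ∫ _x in segment ℝ p q, c ∂(μH[1]) = ‖q - p‖ * c := by
  rw [setIntegral_const, measureReal_def, hausdorffMeasure_segment, edist_dist, dist_eq_norm, norm_sub_rev,
    ENNReal.toReal_ofReal (norm_nonneg _), smul_eq_mul]

lemma interval_CS (f : ℝ → ℝ) (hf : Continuous f) (l : ℝ) (hl : 0 < l) :
    (∫ t in (0:ℝ)..l, f t) ^ 2 ≤ l * ∫ t in (0:ℝ)..l, (f t) ^ 2 := by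
  set I := ∫ t in (0:ℝ)..l, f t with hI
  set c := I / l with hc
  have hint : IntervalIntegrable f volume 0 l := hf.intervalIntegrable 0 l
  have hint2 : IntervalIntegrable (fun t => (f t) ^ 2) volume 0 l :=
    (hf.pow 2).intervalIntegrable 0 l
  have key : (0:ℝ) ≤ ∫ t in (0:ℝ)..l, (f t - c) ^ 2 :=
    intervalIntegral.integral_nonneg hl.le (fun t _ => sq_nonneg _)
  have expand : ∫ t in (0:ℝ)..l, (f t - c) ^ 2
      = (∫ t in (0:ℝ)..l, (f t) ^ 2) - 2 * c * I + c ^ 2 * l := by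
    have : ∀ t, (f t - c) ^ 2 = (f t) ^ 2 - 2 * c * f t + c ^ 2 := by intro t; ring
    rw [intervalIntegral.integral_congr (fun t _ => this t)]
    rw [intervalIntegral.integral_add (hint2.sub (hint.const_mul _)) intervalIntegrable_const,
      intervalIntegral.integral_sub hint2 (hint.const_mul _),
      intervalIntegral.integral_const_mul, intervalIntegral.integral_const]
    simp [← hI]; ring
  have hc2 : c * l = I := by rw [hc, div_mul_cancel₀ I hl.ne']
  nlinarith [key, expand, sq_nonneg c]

lemma energy_lower {u : EuclideanSpace ℝ (Fin N) → ℝ} (hu : ContDiff ℝ (⊤ : ℕ∞) u)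
    (p q : EuclideanSpace ℝ (Fin N)) (hpq : q ≠ p) :
    (u q - u p) ^ 2 / ‖q - p‖ ≤
      ∫ x in segment ℝ p q, (fderiv ℝ u x (‖q - p‖⁻¹ • (q - p))) ^ 2 ∂(μH[1]) := by
  set l := ‖q - p‖ with hldef
  have hl : l ≠ 0 := by simpa [hldef, sub_eq_zero] using hpq
  have hlpos : 0 < l := lt_of_le_of_ne (norm_nonneg _) (Ne.symm hl)
  set v : EuclideanSpace ℝ (Fin N) := l⁻¹ • (q - p) with hvdef
  have hv : ‖v‖ = 1 := by
    rw [hvdef, norm_smul, norm_inv, Real.norm_eq_abs, abs_of_pos hlpos, inv_mul_cancel₀ hl]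
  have hlv : l • v = q - p := by rw [hvdef, smul_smul, mul_inv_cancel₀ hl, one_smul]
  have hg : Continuous (fun x => (fderiv ℝ u x v) ^ 2) :=
    ((hu.continuous_fderiv (by simp)).clm_apply continuous_const).pow 2
  have hchg : ∫ x in segment ℝ p q, (fderiv ℝ u x v) ^ 2 ∂(μH[1])
      = ∫ t in (0:ℝ)..l, (fderiv ℝ u (p + t • v) v) ^ 2 := by
    rw [seg_param p q hpq, ← hvdef, ← hldef, line_integral p v hv l _ hg,
      intervalIntegral.integral_of_le hlpos.le, integral_Icc_eq_integral_Ioc]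
  have hderiv : ∀ t : ℝ, HasDerivAt (fun s : ℝ => u (p + s • v))
      (fderiv ℝ u (p + t • v) v) t := by
    intro t
    have hγ : HasDerivAt (fun s : ℝ => p + s • v) v t := by
      simpa using ((hasDerivAt_id t).smul_const v).const_add p
    exact (hu.differentiable (by simp) _).hasFDerivAt.comp_hasDerivAt t hγ
  have hfc : Continuous (fun t : ℝ => fderiv ℝ u (p + t • v) v) := by
    have : Continuous (fun t : ℝ => p + t • v) := by continuity
    exact ((hu.continuous_fderiv (by simp)).clm_apply continuous_const).comp this
  have hftc : ∫ t in (0:ℝ)..l, fderiv ℝ u (p + t • v) v = u q - u p := by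
    have := intervalIntegral.integral_eq_sub_of_hasDerivAt
      (f := fun s : ℝ => u (p + s • v)) (f' := fun t => fderiv ℝ u (p + t • v) v)
      (fun t _ => hderiv t) (hfc.intervalIntegrable 0 l)
    rw [this]
    congr 1
    · show u (p + l • v) = u q
      rw [hlv]; congr 1; abel
    · show u (p + (0:ℝ) • v) = u p
      congr 1; simp
  have hCS := interval_CS (fun t => fderiv ℝ u (p + t • v) v) hfc l hlpos
  rw [hftc] at hCS
  rw [hchg, div_le_iff₀ hlpos]
  nlinarith [hCS]


variable {N n : ℕ} (A0 : EuclideanSpace ℝ (Fin N)) (A : Fin n → EuclideanSpace ℝ (Fin N))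

def RS : Set ℝ :=
  { r : ℝ | ∃ u : EuclideanSpace ℝ (Fin N) → ℝ, ContDiff ℝ (⊤ : ℕ∞) u ∧
    (u A0 + ∑ i, u (A i)) = 0 ∧ (u A0 ^ 2 + ∑ i, u (A i) ^ 2) ≠ 0 ∧
    r = (∑ i, ∫ x in segment ℝ A0 (A i),
          (fderiv ℝ u x (starTau A0 A i)) ^ 2 ∂(μH[1])) /
        (u A0 ^ 2 + ∑ i, u (A i) ^ 2) }

lemma starLambda1_eq : starLambda1 A0 A = sInf (RS A0 A) := rfl

variable {A0 A}

lemma RS_nonneg : ∀ r ∈ RS A0 A, 0 ≤ r := by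
  rintro r ⟨u, hu, h1, h2, rfl⟩
  apply div_nonneg
  · exact Finset.sum_nonneg fun i _ => integral_nonneg fun x => sq_nonneg _
  · positivity

lemma RS_bdd : BddBelow (RS A0 A) := ⟨0, fun r hr => RS_nonneg r hr⟩

lemma lambda1_nonneg : 0 ≤ starLambda1 A0 A :=
  Real.sInf_nonneg RS_nonneg

lemma lambda1_le {r : ℝ} (hr : r ∈ RS A0 A) : starLambda1 A0 A ≤ r :=
  csInf_le RS_bdd hr

section Star
variable (hA : IsStarGraph A0 A)
include hA

lemma len_pos (i : Fin n) : 0 < ‖A i - A0‖ := by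
  rw [norm_pos_iff, sub_ne_zero]; exact hA.1 i

lemma smul_starTau (i : Fin n) : ‖A i - A0‖ • starTau A0 A i = A i - A0 := by
  rw [starTau, smul_smul, mul_inv_cancel₀ (len_pos hA i).ne', one_smul]

lemma starTau_norm (i : Fin n) : ‖starTau A0 A i‖ = 1 := by
  rw [starTau, norm_smul, norm_inv, Real.norm_eq_abs, abs_of_pos (len_pos hA i),
    inv_mul_cancel₀ (len_pos hA i).ne']

lemma starTau_ne {i j : Fin n} (hij : i ≠ j) : starTau A0 A i ≠ starTau A0 A j := by
  intro heq
  have key : ∀ a b : Fin n, starTau A0 A a = starTau A0 A b →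
      ‖A a - A0‖ ≤ ‖A b - A0‖ → segment ℝ A0 (A a) ⊆ segment ℝ A0 (A b) := by
    intro a b hab hle
    rw [seg_param A0 (A a) (hA.1 a), seg_param A0 (A b) (hA.1 b)]
    rintro x ⟨t, ⟨h0, h1⟩, rfl⟩
    exact ⟨t, ⟨h0, h1.trans hle⟩, by
      show A0 + t • starTau A0 A b = A0 + t • starTau A0 A a
      rw [hab]⟩
  rcases le_total ‖A i - A0‖ ‖A j - A0‖ with h | h
  · exact hA.2 i j hij (key i j heq h)
  · exact hA.2 j i hij.symm (key j i heq.symm h)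

lemma lambda1_mul_norms_le (hcenter : A0 + ∑ i, A i = 0) :
    starLambda1 A0 A * (‖A0‖ ^ 2 + ∑ i, ‖A i‖ ^ 2) ≤ ∑ i, ‖A i - A0‖ := by
  set lam := starLambda1 A0 A with hlam
  have key : ∀ k : Fin N,
      lam * ((A0 k) ^ 2 + ∑ i, (A i k) ^ 2) ≤ ∑ i, ‖A i - A0‖ * (starTau A0 A i k) ^ 2 := by
    intro k
    set ck : ℝ := (A0 k) ^ 2 + ∑ i, (A i k) ^ 2 with hck
    set Ek : ℝ := ∑ i, ‖A i - A0‖ * (starTau A0 A i k) ^ 2 with hEk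
    have hEknn : 0 ≤ Ek := Finset.sum_nonneg fun i _ => by positivity
    by_cases hc : ck = 0
    · rw [hc, mul_zero]; exact hEknn
    · have hckpos : 0 < ck := lt_of_le_of_ne (by positivity) (Ne.symm hc)
      have hmem : Ek / ck ∈ RS A0 A := by
        refine ⟨fun x => x k, (EuclideanSpace.proj (𝕜 := ℝ) k).contDiff, ?_, hc, ?_⟩
        · have h0 : (A0 + ∑ i, A i) k = 0 := by rw [hcenter]; rfl
          have hs : (∑ i, A i) k = ∑ i, A i k := by
            induction (Finset.univ : Finset (Fin n)) using Finset.induction with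
            | empty => rfl
            | insert _ _ hx ih => rw [Finset.sum_insert hx, Finset.sum_insert hx, ← ih]; rfl
          rw [show A0 k + ∑ x, A x k = A0 k + (∑ i, A i) k by rw [hs], ← h0]
          rfl
        · congr 1
          refine Finset.sum_congr rfl fun i _ => ?_
          have hfd : (fun x : EuclideanSpace ℝ (Fin N) =>
              (fderiv ℝ (fun y : EuclideanSpace ℝ (Fin N) => y k) x (starTau A0 A i)) ^ 2)
              = fun _x => (starTau A0 A i k) ^ 2 := by
            funext x
            rw [show (fun y : EuclideanSpace ℝ (Fin N) => y k)
              = ⇑(EuclideanSpace.proj (𝕜 := ℝ) k) from rfl, ContinuousLinearMap.fderiv]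
            rfl
          rw [hfd, integral_const_seg]
      have := lambda1_le hmem
      calc lam * ck ≤ (Ek / ck) * ck := by
            exact mul_le_mul_of_nonneg_right this hckpos.le
        _ = Ek := by field_simp
  have hsum := Finset.sum_le_sum (fun k (_ : k ∈ Finset.univ) => key k)
  have lhs_eq : ∑ k, lam * ((A0 k) ^ 2 + ∑ i, (A i k) ^ 2)
      = lam * (‖A0‖ ^ 2 + ∑ i, ‖A i‖ ^ 2) := by
    rw [← Finset.mul_sum]
    congr 1
    rw [Finset.sum_add_distrib, ← enorm_sq, Finset.sum_comm]
    congr 1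
    exact Finset.sum_congr rfl fun i _ => (enorm_sq (A i)).symm
  have rhs_eq : ∑ k, ∑ i, ‖A i - A0‖ * (starTau A0 A i k) ^ 2 = ∑ i, ‖A i - A0‖ := by
    rw [Finset.sum_comm]
    refine Finset.sum_congr rfl fun i _ => ?_
    rw [← Finset.mul_sum, ← enorm_sq, starTau_norm hA]
    ring
  rw [lhs_eq, rhs_eq] at hsum
  exact hsum

end Star

lemma fderiv_inner (v : EuclideanSpace ℝ (Fin N)) (x w : EuclideanSpace ℝ (Fin N)) :
    fderiv ℝ (fun y : EuclideanSpace ℝ (Fin N) => ⟪v, y⟫) x w = ⟪v, w⟫ := by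
  rw [show (fun y : EuclideanSpace ℝ (Fin N) => ⟪v, y⟫) = ⇑(innerSL ℝ v) from rfl,
    ContinuousLinearMap.fderiv]
  rfl

lemma lambda1_eq_inv (hA : IsStarGraph A0 A) (hn : 0 < n) (h0 : A0 = 0)
    (hcenter : A0 + ∑ i, A i = 0) (hlen : ∀ i j, ‖A i - A0‖ = ‖A j - A0‖) (i : Fin n) :
    sInf (RS A0 A) = ‖A i - A0‖⁻¹ := by
  set l := ‖A i - A0‖ with hldef
  have hlpos : 0 < l := len_pos hA i
  set v := starTau A0 A i with hvdef
  set u : EuclideanSpace ℝ (Fin N) → ℝ := fun y => ⟪v, y⟫ with hudef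
  have hu : ContDiff ℝ (⊤ : ℕ∞) u := (innerSL ℝ v).contDiff
  set b : Fin n → ℝ := fun j => ⟪v, starTau A0 A j⟫ with hbdef
  have hA0u : u A0 = 0 := by rw [hudef, h0]; exact inner_zero_right v
  have hAj : ∀ j, A j = ‖A j - A0‖ • starTau A0 A j := by
    intro j
    rw [smul_starTau hA j, h0, sub_zero]
  have huAj : ∀ j, u (A j) = ‖A j - A0‖ * b j := by
    intro j
    show ⟪v, A j⟫ = _
    conv_lhs => rw [hAj j]
    rw [real_inner_smul_right]
  have hsum : u A0 + ∑ j, u (A j) = 0 := by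
    rw [hudef]
    show ⟪v, A0⟫ + ∑ j, ⟪v, A j⟫ = 0
    rw [← inner_sum, ← inner_add_right, hcenter, inner_zero_right]
  have hbi : b i = 1 := by
    rw [hbdef]
    show ⟪v, v⟫ = 1
    rw [real_inner_self_eq_norm_sq, starTau_norm hA i]; norm_num
  have hB : (1:ℝ) ≤ ∑ j, b j ^ 2 := by
    calc (1:ℝ) = b i ^ 2 := by rw [hbi]; norm_num
      _ ≤ ∑ j, b j ^ 2 :=
        Finset.single_le_sum (fun j _ => sq_nonneg (b j)) (Finset.mem_univ i)
  set B := ∑ j, b j ^ 2 with hBdef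
  have hBpos : 0 < B := lt_of_lt_of_le one_pos hB
  have hden : u A0 ^ 2 + ∑ j, u (A j) ^ 2 = l ^ 2 * B := by
    rw [hA0u, hBdef, Finset.mul_sum]
    simp only [huAj]
    rw [zero_pow (by norm_num), zero_add]
    refine Finset.sum_congr rfl fun j _ => ?_
    rw [hlen j i, ← hldef]
    ring
  have hnum : (∑ j, ∫ x in segment ℝ A0 (A j),
      (fderiv ℝ u x (starTau A0 A j)) ^ 2 ∂(μH[1])) = l * B := by
    rw [hBdef, Finset.mul_sum]
    refine Finset.sum_congr rfl fun j _ => ?_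
    have hfd : (fun x : EuclideanSpace ℝ (Fin N) =>
        (fderiv ℝ u x (starTau A0 A j)) ^ 2) = fun _x => (b j) ^ 2 := by
      funext x
      rw [hudef]
      rw [fderiv_inner]
    rw [hfd, integral_const_seg, hlen j i, ← hldef]
  have hdne : u A0 ^ 2 + ∑ j, u (A j) ^ 2 ≠ 0 := by
    rw [hden]
    exact (mul_pos (by positivity) hBpos).ne'
  have hmem : ((∑ j, ∫ x in segment ℝ A0 (A j),
      (fderiv ℝ u x (starTau A0 A j)) ^ 2 ∂(μH[1])) /
      (u A0 ^ 2 + ∑ j, u (A j) ^ 2)) ∈ RS A0 A := ⟨u, hu, hsum, hdne, rfl⟩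
  have hval : ((∑ j, ∫ x in segment ℝ A0 (A j),
      (fderiv ℝ u x (starTau A0 A j)) ^ 2 ∂(μH[1])) /
      (u A0 ^ 2 + ∑ j, u (A j) ^ 2)) = l⁻¹ := by
    rw [hnum, hden]
    field_simp
  refine le_antisymm (by rw [← hval]; exact lambda1_le hmem) ?_
  refine le_csInf ⟨_, hmem⟩ ?_
  rintro r ⟨w, hw, hwsum, hwne, rfl⟩
  set a := w A0 with hadef
  have hdnn : (0:ℝ) ≤ a ^ 2 + ∑ j, w (A j) ^ 2 := by positivity
  have hdpos : 0 < a ^ 2 + ∑ j, w (A j) ^ 2 := lt_of_le_of_ne hdnn (Ne.symm hwne)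
  rw [le_div_iff₀ hdpos]
  have hSw : ∑ j, w (A j) = -a := by linarith [hwsum]
  have hexp : ∑ j, (w (A j) - a) ^ 2
      = (∑ j, w (A j) ^ 2) - 2 * a * (∑ j, w (A j)) + n * a ^ 2 := by
    have h1 : ∀ j : Fin n, (w (A j) - a) ^ 2
        = w (A j) ^ 2 - 2 * a * w (A j) + a ^ 2 := fun j => by ring
    rw [Finset.sum_congr rfl fun j _ => h1 j, Finset.sum_add_distrib,
      Finset.sum_sub_distrib, ← Finset.mul_sum, Finset.sum_const, Finset.card_univ,
      Fintype.card_fin, nsmul_eq_mul]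
  have hdisc : a ^ 2 + ∑ j, w (A j) ^ 2 ≤ ∑ j, (w (A j) - a) ^ 2 := by
    rw [hexp, hSw]
    have hnn : (0:ℝ) ≤ (n : ℝ) := Nat.cast_nonneg n
    nlinarith [sq_nonneg a]
  have henergy : ∑ j, (w (A j) - a) ^ 2 / l
      ≤ ∑ j, ∫ x in segment ℝ A0 (A j), (fderiv ℝ w x (starTau A0 A j)) ^ 2 ∂(μH[1]) := by
    refine Finset.sum_le_sum fun j _ => ?_
    have := energy_lower hw A0 (A j) (hA.1 j)
    rw [show ‖A j - A0‖⁻¹ • (A j - A0) = starTau A0 A j from rfl] at this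
    rw [hlen j i, ← hldef] at this
    exact this
  calc l⁻¹ * (a ^ 2 + ∑ j, w (A j) ^ 2)
      ≤ l⁻¹ * ∑ j, (w (A j) - a) ^ 2 := by
        exact mul_le_mul_of_nonneg_left hdisc (by positivity)
    _ = ∑ j, (w (A j) - a) ^ 2 / l := by
        rw [Finset.mul_sum]
        exact Finset.sum_congr rfl fun j _ => by rw [div_eq_inv_mul]
    _ ≤ _ := henergy


end ReillyAux

set_option maxHeartbeats 2000000 in
open ReillyAux in
/-- **Equality case in the Reilly inequality for star-shaped graphs**: with the center of
mass at the origin (`∑_{i=0}^n Aᵢ = 0`), equality `λ₁ ∑ᵢ ℓᵢ = n + |∑ᵢ τᵢ|²` holds if and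
only if `A₀ = 0`, the graph is stationary at its center (`∑ᵢ τᵢ = 0`) and all edge lengths
are equal; in that case `λ₁ = 1/ℓᵢ` for every `i` and all endpoints lie on the sphere of
radius `1/λ₁` centered at the origin. -/
theorem reilly_star_graph_equality_case {N n : ℕ} (hn : 2 ≤ n)
    (A0 : EuclideanSpace ℝ (Fin N)) (A : Fin n → EuclideanSpace ℝ (Fin N))
    (hA : IsStarGraph A0 A) (hcenter : A0 + ∑ i, A i = 0) :
    (starLambda1 A0 A * (∑ i, ‖A i - A0‖) = n + ‖∑ i, starTau A0 A i‖ ^ 2 ↔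
      A0 = 0 ∧ (∑ i, starTau A0 A i) = 0 ∧ ∀ i j, ‖A i - A0‖ = ‖A j - A0‖) ∧
    (starLambda1 A0 A * (∑ i, ‖A i - A0‖) = n + ‖∑ i, starTau A0 A i‖ ^ 2 →
      (∀ i, starLambda1 A0 A = ‖A i - A0‖⁻¹) ∧
        ∀ i, ‖A i‖ = (starLambda1 A0 A)⁻¹) := by
  have hlamRS : starLambda1 A0 A = sInf (RS A0 A) := rfl
  have hnpos : 0 < n := by omega
  set T := ∑ i, starTau A0 A i with hTdef
  set L := ∑ i, ‖A i - A0‖ with hLdef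
  have hLpos : 0 < L :=
    Finset.sum_pos (fun i _ => len_pos hA i) ⟨⟨0, hnpos⟩, Finset.mem_univ _⟩
  -- the backward implication machinery
  have hback : (A0 = 0 ∧ T = 0 ∧ ∀ i j, ‖A i - A0‖ = ‖A j - A0‖) →
      starLambda1 A0 A * L = n + ‖T‖ ^ 2 := by
    rintro ⟨h0, hT0, hlen⟩
    set i0 : Fin n := ⟨0, hnpos⟩ with hi0
    have hlam : starLambda1 A0 A = ‖A i0 - A0‖⁻¹ := by
      rw [hlamRS]; exact lambda1_eq_inv hA hnpos h0 hcenter hlen i0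
    have hLeq : L = n * ‖A i0 - A0‖ := by
      rw [hLdef, Finset.sum_congr rfl fun i _ => hlen i i0, Finset.sum_const,
        Finset.card_univ, Fintype.card_fin, nsmul_eq_mul]
    rw [hlam, hLeq, hT0, norm_zero]
    have := (len_pos hA i0).ne'
    field_simp
    norm_num
  -- the forward implication
  have hforward : starLambda1 A0 A * L = n + ‖T‖ ^ 2 →
      A0 = 0 ∧ T = 0 ∧ ∀ i j, ‖A i - A0‖ = ‖A j - A0‖ := by
    intro Heq
    have hkey := lambda1_mul_norms_le hA hcenter
    have hncast : (0:ℝ) < n := by exact_mod_cast hnpos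
    have hDpos : (0:ℝ) < n + ‖T‖ ^ 2 := by positivity
    set t := L / ((n:ℝ) + ‖T‖ ^ 2) with htdef
    have htpos : 0 < t := div_pos hLpos hDpos
    have htD : t * ((n:ℝ) + ‖T‖ ^ 2) = L := by
      rw [htdef]; field_simp
    set Sq := ‖A0‖ ^ 2 + ∑ i, ‖A i‖ ^ 2 with hSqdef
    have hineq : Sq ≤ t * L := by
      have h1 : ((n:ℝ) + ‖T‖ ^ 2) * Sq ≤ L ^ 2 := by
        calc ((n:ℝ) + ‖T‖ ^ 2) * Sq = (starLambda1 A0 A * L) * Sq := by rw [Heq]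
          _ = L * (starLambda1 A0 A * Sq) := by ring
          _ ≤ L * L := mul_le_mul_of_nonneg_left hkey hLpos.le
          _ = L ^ 2 := (sq L).symm
      have h2 : L ^ 2 = t * L * ((n:ℝ) + ‖T‖ ^ 2) := by
        rw [mul_comm t L, mul_assoc, htD]; ring
      rw [h2] at h1
      exact le_of_mul_le_mul_right (by linarith [h1]) hDpos
    have hip : ∀ i, ⟪starTau A0 A i, A i⟫ = ⟪starTau A0 A i, A0⟫ + ‖A i - A0‖ := by
      intro i
      have hAi : A i = A0 + ‖A i - A0‖ • starTau A0 A i := by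
        rw [smul_starTau hA i]; abel
      conv_lhs => rw [hAi]
      rw [inner_add_right, real_inner_smul_right, real_inner_self_eq_norm_sq,
        starTau_norm hA i]
      ring
    have hterm : ∀ i, ‖A i - t • starTau A0 A i‖ ^ 2
        = ‖A i‖ ^ 2 - 2 * t * ⟪starTau A0 A i, A i⟫ + t ^ 2 := by
      intro i
      rw [norm_sub_sq_real, real_inner_smul_right, norm_smul, Real.norm_eq_abs,
        abs_of_pos htpos, starTau_norm hA i, real_inner_comm]
      ring
    have hsumt : ∑ i, ⟪starTau A0 A i, A i⟫ = ⟪T, A0⟫ + L := by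
      rw [Finset.sum_congr rfl fun i _ => hip i, Finset.sum_add_distrib, hTdef,
        sum_inner, hLdef]
    have hA0T : ‖A0 + t • T‖ ^ 2 = ‖A0‖ ^ 2 + 2 * t * ⟪T, A0⟫ + t ^ 2 * ‖T‖ ^ 2 := by
      rw [norm_add_sq_real, real_inner_smul_right, norm_smul, Real.norm_eq_abs,
        abs_of_pos htpos, real_inner_comm]
      ring
    have hsum2 : (∑ i, ‖A i - t • starTau A0 A i‖ ^ 2) + ‖A0 + t • T‖ ^ 2 ≤ 0 := by
      have hexp : (∑ i, ‖A i - t • starTau A0 A i‖ ^ 2) + ‖A0 + t • T‖ ^ 2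
          = Sq - 2 * t * L + t * L := by
        rw [Finset.sum_congr rfl fun i _ => hterm i, Finset.sum_add_distrib,
          Finset.sum_sub_distrib, ← Finset.mul_sum, hsumt, Finset.sum_const,
          Finset.card_univ, Fintype.card_fin, nsmul_eq_mul, hA0T, hSqdef]
        have : t ^ 2 * ((n:ℝ) + ‖T‖ ^ 2) = t * L := by
          rw [pow_two, mul_assoc, htD]
        nlinarith [this]
      rw [hexp]
      linarith [hineq]
    have hAi0 : ∀ i, A i = t • starTau A0 A i := by
      intro i
      have hnn : ∀ j ∈ Finset.univ, (0:ℝ) ≤ ‖A j - t • starTau A0 A j‖ ^ 2 :=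
        fun j _ => sq_nonneg _
      have hs0 : ∑ j, ‖A j - t • starTau A0 A j‖ ^ 2 = 0 := by
        have h1 : (0:ℝ) ≤ ∑ j, ‖A j - t • starTau A0 A j‖ ^ 2 := Finset.sum_nonneg hnn
        linarith [sq_nonneg ‖A0 + t • T‖, hsum2]
      have h2 : ‖A i - t • starTau A0 A i‖ ^ 2 = 0 :=
        (Finset.sum_eq_zero_iff_of_nonneg hnn).mp hs0 i (Finset.mem_univ i)
      have h3 : A i - t • starTau A0 A i = 0 := by
        rw [← norm_eq_zero]
        exact sq_eq_zero_iff.mp h2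
      rw [sub_eq_zero] at h3
      exact h3
    have hA0' : A0 = -(t • T) := by
      have h2 : ‖A0 + t • T‖ ^ 2 = 0 := by
        have h1 : (0:ℝ) ≤ ∑ j, ‖A j - t • starTau A0 A j‖ ^ 2 :=
          Finset.sum_nonneg fun j _ => sq_nonneg _
        linarith [sq_nonneg ‖A0 + t • T‖, hsum2]
      have h3 : A0 + t • T = 0 := by
        rw [← norm_eq_zero]
        exact sq_eq_zero_iff.mp h2
      exact eq_neg_of_add_eq_zero_left h3
    have hstar : ∀ i, ‖A i - A0‖ • starTau A0 A i = t • starTau A0 A i + t • T := by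
      intro i
      calc ‖A i - A0‖ • starTau A0 A i = A i - A0 := smul_starTau hA i
        _ = t • starTau A0 A i - -(t • T) := by rw [← hAi0 i, ← hA0']
        _ = t • starTau A0 A i + t • T := by abel
    by_cases hT0 : T = 0
    · have hlen : ∀ i, ‖A i - A0‖ = t := by
        intro i
        have h := hstar i
        rw [hT0, smul_zero, add_zero] at h
        exact smul_left_injective ℝ (by
          rw [← norm_ne_zero_iff, starTau_norm hA i]; norm_num) h
      have hA00 : A0 = 0 := by rw [hA0', hT0, smul_zero, neg_zero]
      exact ⟨hA00, hT0, fun i j => by rw [hlen i, hlen j]⟩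
    · exfalso
      set e : Fin n → ℝ := fun i => (‖A i - A0‖ - t) / t with hedef
      have hτeq : ∀ i, t • T = (‖A i - A0‖ - t) • starTau A0 A i := by
        intro i
        rw [sub_smul, hstar i]
        abel
      have hTe : ∀ i, T = e i • starTau A0 A i := by
        intro i
        have := congrArg (fun z => t⁻¹ • z) (hτeq i)
        simpa [smul_smul, inv_mul_cancel₀ htpos.ne', hedef, div_eq_inv_mul,
          mul_comm] using this
      have hnorme : ∀ i, |e i| = ‖T‖ := by
        intro i
        rw [hTe i, norm_smul, starTau_norm hA i, Real.norm_eq_abs, mul_one]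
      have he0 : ∀ i, e i ≠ 0 := by
        intro i h
        apply hT0
        rw [hTe i, h, zero_smul]
      have hτE : ∀ i, starTau A0 A i = (e i)⁻¹ • T := by
        intro i
        rw [hTe i, smul_smul, inv_mul_cancel₀ (he0 i), one_smul]
      have hinj : ∀ i j : Fin n, i ≠ j → e i ≠ e j := by
        intro i j hij hee
        exact starTau_ne hA hij (by rw [hτE i, hτE j, hee])
      have hcases : ∀ i, e i = ‖T‖ ∨ e i = -‖T‖ :=
        fun i => abs_eq (norm_nonneg T) |>.mp (hnorme i)
      have hn2 : n = 2 := by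
        by_contra hne2
        have hn3 : 3 ≤ n := by omega
        have d01 : (⟨0, by omega⟩ : Fin n) ≠ ⟨1, by omega⟩ := by simp [Fin.ext_iff]
        have d02 : (⟨0, by omega⟩ : Fin n) ≠ ⟨2, by omega⟩ := by simp [Fin.ext_iff]
        have d12 : (⟨1, by omega⟩ : Fin n) ≠ ⟨2, by omega⟩ := by simp [Fin.ext_iff]
        rcases hcases ⟨0, by omega⟩ with h0 | h0 <;>
          rcases hcases ⟨1, by omega⟩ with h1 | h1 <;>
          rcases hcases ⟨2, by omega⟩ with h2 | h2
        · exact hinj _ _ d01 (h0.trans h1.symm)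
        · exact hinj _ _ d01 (h0.trans h1.symm)
        · exact hinj _ _ d02 (h0.trans h2.symm)
        · exact hinj _ _ d12 (h1.trans h2.symm)
        · exact hinj _ _ d12 (h1.trans h2.symm)
        · exact hinj _ _ d02 (h0.trans h2.symm)
        · exact hinj _ _ d01 (h0.trans h1.symm)
        · exact hinj _ _ d01 (h0.trans h1.symm)
      subst hn2
      have hT2 : T = starTau A0 A 0 + starTau A0 A 1 := by
        rw [hTdef]
        exact Fin.sum_univ_two _
      have d01 : (0 : Fin 2) ≠ 1 := by decide
      have hsum01 : (e 0)⁻¹ + (e 1)⁻¹ = 0 := by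
        rcases hcases 0 with h0 | h0 <;> rcases hcases 1 with h1 | h1
        · exact absurd (h0.trans h1.symm) (hinj 0 1 d01)
        · rw [h0, h1, inv_neg]
          ring
        · rw [h0, h1, inv_neg]
          ring
        · exact absurd (h0.trans h1.symm) (hinj 0 1 d01)
      have : T = ((e 0)⁻¹ + (e 1)⁻¹) • T := by
        conv_lhs => rw [hT2, hτE 0, hτE 1]
        rw [add_smul]
      rw [hsum01, zero_smul] at this
      exact hT0 this
  refine ⟨⟨hforward, hback⟩, fun Heq => ?_⟩
  obtain ⟨h0, hT0, hlen⟩ := hforward Heq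
  have hlam : ∀ i, starLambda1 A0 A = ‖A i - A0‖⁻¹ := fun i => by
    rw [hlamRS]; exact lambda1_eq_inv hA hnpos h0 hcenter hlen i
  refine ⟨hlam, fun i => ?_⟩
  have hnorm : ‖A i‖ = ‖A i - A0‖ := by rw [h0, sub_zero]
  rw [hnorm, hlam i, inv_inv]
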